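/- arXiv:1610.01051 — 3 statements merged into one kernel-verified Lean document; each statement's English description precedes it below -/
import Mathlib

section
/- If A = U - V is a proper splitting of a real m×n matrix A (i.e., R(U) = R(A) and N(U) = N(A)), then I - U†V is nonsingular and A† = (I - U†V)⁻¹ U†, where † denotes the Moore-Penrose inverse. -/
open Matrix Polynomial

/-- `X` is the Moore-Penrose inverse of `A`. -/
def IsMP {m n : ℕ} (A : Matrix (Fin m) (Fin n) ℝ) (X : Matrix (Fin n) (Fin m) ℝ) : Prop :=
  A * X * A = A ∧ X * A * X = X ∧ (A * X)ᵀ = A * X ∧ (X * A)ᵀ = X * A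

/-- `A = U - V` is a proper splitting: `R(U)=R(A)` and `N(U)=N(A)`. -/
def ProperSplitting {m n : ℕ} (A U V : Matrix (Fin m) (Fin n) ℝ) : Prop :=
  A = U - V ∧ LinearMap.range U.mulVecLin = LinearMap.range A.mulVecLin ∧
    LinearMap.ker U.mulVecLin = LinearMap.ker A.mulVecLin

/-- `μ : ℂ` is an eigenvalue of the real matrix `M`. -/
def IsEigen {n : ℕ} (M : Matrix (Fin n) (Fin n) ℝ) (μ : ℂ) : Prop :=
  ((M.map (algebraMap ℝ ℂ)).charpoly).IsRoot μ

/-- The spectral radius of a real square matrix. -/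
noncomputable def specRad {n : ℕ} (M : Matrix (Fin n) (Fin n) ℝ) : ℝ :=
  sSup {r : ℝ | ∃ μ : ℂ, IsEigen M μ ∧ r = ‖μ‖}

/-- Entrywise nonnegativity. -/
def EntryNonneg {m n : ℕ} (A : Matrix (Fin m) (Fin n) ℝ) : Prop := ∀ i j, 0 ≤ A i j

/-- Entrywise order. -/
def EntryLE {m n : ℕ} (A B : Matrix (Fin m) (Fin n) ℝ) : Prop := ∀ i j, A i j ≤ B i j

/-- Entrywise strict order. -/
def EntryLT {m n : ℕ} (A B : Matrix (Fin m) (Fin n) ℝ) : Prop := ∀ i j, A i j < B i j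

/-! A proper splitting forces `A` and `U` to have the same orthogonal projections onto their
ranges and onto the orthogonal complements of their null spaces: `A A† = U U†` and
`A† A = U† U`. With these identities, `W = I - A† A + A† U` satisfies `W U† = A†`, and
`W (I - U† V) = W - A† V = I` because `V = U - A`. So `W` is the inverse of `I - U† V`,
and `A† = W U† = (I - U† V)⁻¹ U†`. -/

namespace Matrix

variable {R : Type*} {l m n : Type*}

theorem mul_mul_eq_of_range_le [Fintype l] [Fintype m] [Fintype n] [CommSemiring R]
    {U : Matrix m n R} {G : Matrix n m R} {A : Matrix m l R} (hUGU : U * G * U = U)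
    (h : LinearMap.range A.mulVecLin ≤ LinearMap.range U.mulVecLin) : U * G * A = A := by
  refine mulVec_injective (funext fun x => ?_)
  obtain ⟨y, hy : U *ᵥ y = A *ᵥ x⟩ := h ⟨x, rfl⟩
  rw [← mulVec_mulVec, ← hy, mulVec_mulVec, hUGU]

theorem mul_mul_eq_of_ker_le [Fintype m] [Fintype n] [CommRing R]
    {U : Matrix m n R} {G : Matrix n m R} {A : Matrix l n R} (hUGU : U * G * U = U)
    (h : LinearMap.ker U.mulVecLin ≤ LinearMap.ker A.mulVecLin) : A * G * U = A := by
  refine mulVec_injective (funext fun x => ?_)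
  have hx : x - (G * U) *ᵥ x ∈ LinearMap.ker U.mulVecLin := by
    rw [LinearMap.mem_ker, mulVecLin_apply, mulVec_sub, mulVec_mulVec, ← Matrix.mul_assoc,
      hUGU, sub_self]
  have hAx := h hx
  rw [LinearMap.mem_ker, mulVecLin_apply, mulVec_sub, sub_eq_zero] at hAx
  rw [Matrix.mul_assoc, ← mulVec_mulVec, ← hAx]

theorem IsSymm.eq_of_mul_eq_right [Fintype n] [CommRing R] {P Q : Matrix n n R} (hP : P.IsSymm)
    (hQ : Q.IsSymm) (hQP : Q * P = P) (hPQ : P * Q = Q) : P = Q :=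
  calc P = Pᵀ := hP.symm
    _ = P * Q := by rw [← hQP, transpose_mul, hP.eq, hQ.eq, hQP]
    _ = Q := hPQ

theorem IsSymm.eq_of_mul_eq_left [Fintype n] [CommRing R] {P Q : Matrix n n R} (hP : P.IsSymm)
    (hQ : Q.IsSymm) (hPQ : P * Q = P) (hQP : Q * P = Q) : P = Q :=
  calc P = P * Q := hPQ.symm
    _ = Qᵀ := by rw [← hQP, transpose_mul, hP.eq, hQ.eq, hQP]
    _ = Q := hQ

end Matrix

variable {m n : ℕ} {A U : Matrix (Fin m) (Fin n) ℝ} {Ad Ud : Matrix (Fin n) (Fin m) ℝ}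

theorem IsMP.mul_eq_of_range_eq (hA : IsMP A Ad) (hU : IsMP U Ud)
    (h : LinearMap.range U.mulVecLin = LinearMap.range A.mulVecLin) : A * Ad = U * Ud :=
  IsSymm.eq_of_mul_eq_right hA.2.2.1 hU.2.2.1
    (by rw [← Matrix.mul_assoc, mul_mul_eq_of_range_le hU.1 h.ge])
    (by rw [← Matrix.mul_assoc, mul_mul_eq_of_range_le hA.1 h.le])

theorem IsMP.mul_eq_of_ker_eq (hA : IsMP A Ad) (hU : IsMP U Ud)
    (h : LinearMap.ker U.mulVecLin = LinearMap.ker A.mulVecLin) : Ad * A = Ud * U :=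
  IsSymm.eq_of_mul_eq_left hA.2.2.2 hU.2.2.2
    (by rw [← Matrix.mul_assoc, Matrix.mul_assoc Ad, Matrix.mul_assoc Ad,
      mul_mul_eq_of_ker_le hU.1 h.le])
    (by rw [← Matrix.mul_assoc, Matrix.mul_assoc Ud, Matrix.mul_assoc Ud,
      mul_mul_eq_of_ker_le hA.1 h.ge])

theorem stmt0 {m n : ℕ} (A U V : Matrix (Fin m) (Fin n) ℝ)
    (Ad : Matrix (Fin n) (Fin m) ℝ) (Ud : Matrix (Fin n) (Fin m) ℝ)
    (hps : ProperSplitting A U V) (hA : IsMP A Ad) (hU : IsMP U Ud) :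
    IsUnit (1 - Ud * V) ∧ Ad = (1 - Ud * V)⁻¹ * Ud := by
  obtain ⟨hAUV, hR, hK⟩ := hps
  have hRange : A * Ad = U * Ud := hA.mul_eq_of_range_eq hU hR
  have hKer : Ad * A = Ud * U := hA.mul_eq_of_ker_eq hU hK
  set W : Matrix (Fin n) (Fin n) ℝ := 1 - Ad * A + Ad * U with hW
  have hWUd : W * Ud = Ad := by
    rw [hW, Matrix.add_mul, Matrix.sub_mul, Matrix.one_mul, hKer, hU.2.1,
      Matrix.mul_assoc Ad U, ← hRange, ← Matrix.mul_assoc, hA.2.1, sub_self, zero_add]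
  have hWL : W * (1 - Ud * V) = 1 := by
    rw [Matrix.mul_sub, Matrix.mul_one, ← Matrix.mul_assoc, hWUd, hW, hAUV, Matrix.mul_sub]
    abel
  refine ⟨IsUnit.of_mul_eq_one_right W hWL, ?_⟩
  rw [Matrix.inv_eq_left_inv hWL, hWUd]
end

section
/- Let A = U - V be a proper weak regular splitting of A ∈ ℝ^{m×n} (i.e., a proper splitting with U† ≥ 0 and U†V ≥ 0 entrywise). Then A† ≥ 0 if and only if the spectral radius ρ(U†V) < 1. -/
open Matrix Polynomial

/-! Write `T = U†V`. Since `AA†` and `UU†` are the orthogonal projections onto the common range,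
and `A†A`, `U†U` those onto the orthogonal complement of the common kernel,
`U† = U†(AA†) = (U†U - T)A† = A† - TA†`. Iterating `A† = U† + TA†` gives
`A† = (∑_{i<k} Tⁱ)U† + TᵏA†`. If `A† ≥ 0`, the nonnegative series `∑ TᵏU†` has bounded partial sums,
so `TᵏU† → 0` and `Tᵏ⁺¹ = TᵏU†V → 0`. Conversely, if `Tᵏ → 0` then `A†` is the limit of the
nonnegative matrices `(∑_{i<k} Tⁱ)U†`. Finally `ρ(T) < 1 ↔ Tᵏ → 0`: one direction is Gelfand's
formula, the other follows by applying `Tᵏ` to an eigenvector. -/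

open Filter Topology

namespace IsMP

variable {m n : ℕ} {A U : Matrix (Fin m) (Fin n) ℝ} {Ad Ud : Matrix (Fin n) (Fin m) ℝ}

theorem mul_mul_eq_of_range_le {k : ℕ} (hU : IsMP U Ud) {B : Matrix (Fin m) (Fin k) ℝ}
    (h : LinearMap.range B.mulVecLin ≤ LinearMap.range U.mulVecLin) : U * Ud * B = B := by
  refine Matrix.ext_iff_mulVec.mpr fun x => ?_
  obtain ⟨y, hy⟩ : ∃ y, U *ᵥ y = B *ᵥ x := h ⟨x, rfl⟩
  rw [← Matrix.mulVec_mulVec, ← hy, Matrix.mulVec_mulVec, hU.1]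

theorem mul_mul_eq_of_ker_le {k : ℕ} (hU : IsMP U Ud) {B : Matrix (Fin k) (Fin n) ℝ}
    (h : LinearMap.ker U.mulVecLin ≤ LinearMap.ker B.mulVecLin) : B * (Ud * U) = B := by
  refine Matrix.ext_iff_mulVec.mpr fun x => ?_
  have hx : x - (Ud * U) *ᵥ x ∈ LinearMap.ker U.mulVecLin := by
    rw [LinearMap.mem_ker, Matrix.mulVecLin_apply, Matrix.mulVec_sub, Matrix.mulVec_mulVec,
      ← Matrix.mul_assoc, hU.1, sub_self]
  have := h hx
  rw [LinearMap.mem_ker, Matrix.mulVecLin_apply, Matrix.mulVec_sub, sub_eq_zero] at this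
  rw [← Matrix.mulVec_mulVec, this]

theorem mul_eq_mul_of_range_eq (hA : IsMP A Ad) (hU : IsMP U Ud)
    (h : LinearMap.range U.mulVecLin = LinearMap.range A.mulVecLin) : A * Ad = U * Ud := by
  have hUA : U * Ud * (A * Ad) = A * Ad := by
    rw [← Matrix.mul_assoc, hU.mul_mul_eq_of_range_le h.ge]
  have hAU : A * Ad * (U * Ud) = U * Ud := by
    rw [← Matrix.mul_assoc, hA.mul_mul_eq_of_range_le h.le]
  calc A * Ad = (U * Ud * (A * Ad))ᵀ := by rw [hUA, hA.2.2.1]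
    _ = U * Ud := by rw [Matrix.transpose_mul, hA.2.2.1, hU.2.2.1, hAU]

theorem mul_eq_mul_of_ker_eq (hA : IsMP A Ad) (hU : IsMP U Ud)
    (h : LinearMap.ker U.mulVecLin = LinearMap.ker A.mulVecLin) : Ad * A = Ud * U := by
  have hAU : A * (Ud * U) = A := hU.mul_mul_eq_of_ker_le h.le
  have hUA : U * (Ad * A) = U := hA.mul_mul_eq_of_ker_le h.ge
  calc Ad * A = (Ad * A * (Ud * U))ᵀ := by rw [Matrix.mul_assoc Ad, hAU, hA.2.2.2]
    _ = Ud * U := by rw [Matrix.transpose_mul, hA.2.2.2, hU.2.2.2, Matrix.mul_assoc Ud, hUA]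

end IsMP

theorem ProperSplitting.pinv_eq_add_mul {m n : ℕ} {A U V : Matrix (Fin m) (Fin n) ℝ}
    {Ad Ud : Matrix (Fin n) (Fin m) ℝ} (hps : ProperSplitting A U V) (hA : IsMP A Ad)
    (hU : IsMP U Ud) : Ad = Ud + Ud * V * Ad := by
  obtain ⟨hAUV, hrange, hker⟩ := hps
  have hUd : Ud = Ad - Ud * V * Ad :=
    calc Ud = Ud * (A * Ad) := by
          rw [hA.mul_eq_mul_of_range_eq hU hrange, ← Matrix.mul_assoc, hU.2.1]
      _ = Ud * U * Ad - Ud * V * Ad := by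
        rw [← Matrix.mul_assoc, hAUV, Matrix.mul_sub, Matrix.sub_mul]
      _ = Ad - Ud * V * Ad := by rw [← hA.mul_eq_mul_of_ker_eq hU hker, hA.2.1]
  exact (eq_sub_iff_add_eq.mp hUd).symm

theorem Matrix.eq_sum_range_pow_mul_add {ι κ R : Type*} [Fintype ι] [DecidableEq ι] [Semiring R]
    {T : Matrix ι ι R} {B X : Matrix ι κ R} (h : X = B + T * X) (k : ℕ) :
    X = (∑ i ∈ Finset.range k, T ^ i) * B + T ^ k * X := by
  induction k with
  | zero => simp
  | succ k ih =>
    calc X = (∑ i ∈ Finset.range k, T ^ i) * B + T ^ k * (B + T * X) := by rw [← h]; exact ih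
      _ = _ := by
        rw [Finset.sum_range_succ, Matrix.add_mul, Matrix.mul_add, ← Matrix.mul_assoc, ← pow_succ,
          add_assoc]

section EntryNonneg

variable {l m n : ℕ}

theorem EntryNonneg.mul {M : Matrix (Fin l) (Fin m) ℝ} {N : Matrix (Fin m) (Fin n) ℝ}
    (hM : EntryNonneg M) (hN : EntryNonneg N) : EntryNonneg (M * N) :=
  fun i j => by
    rw [Matrix.mul_apply]
    exact Finset.sum_nonneg fun k _ => mul_nonneg (hM i k) (hN k j)

theorem EntryNonneg.pow {T : Matrix (Fin n) (Fin n) ℝ} (hT : EntryNonneg T) (k : ℕ) :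
    EntryNonneg (T ^ k) := by
  induction k with
  | zero => intro i j; rw [pow_zero, Matrix.one_apply]; split_ifs <;> norm_num
  | succ k ih => rw [pow_succ]; exact ih.mul hT

theorem EntryNonneg.sum_range_pow {T : Matrix (Fin n) (Fin n) ℝ} (hT : EntryNonneg T) (k : ℕ) :
    EntryNonneg (∑ i ∈ Finset.range k, T ^ i) := fun p q => by
  rw [Matrix.sum_apply]
  exact Finset.sum_nonneg fun i _ => hT.pow i p q

theorem tendsto_pow_mul_of_eq_add_mul {T : Matrix (Fin n) (Fin n) ℝ}
    {B X : Matrix (Fin n) (Fin m) ℝ} (hT : EntryNonneg T) (hB : EntryNonneg B)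
    (hX : EntryNonneg X) (h : X = B + T * X) : Tendsto (fun k => T ^ k * B) atTop (𝓝 0) := by
  refine tendsto_pi_nhds.mpr fun p => tendsto_pi_nhds.mpr fun q => ?_
  refine (summable_of_sum_range_le (c := X p q) (fun k => (hT.pow k).mul hB p q)
    fun k => ?_).tendsto_atTop_zero
  have hk := congrFun (congrFun (Matrix.eq_sum_range_pow_mul_add h k) p) q
  rw [Matrix.add_apply, Matrix.sum_mul, Matrix.sum_apply] at hk
  linarith [(hT.pow k).mul hX p q]

theorem entryNonneg_of_eq_add_mul {T : Matrix (Fin n) (Fin n) ℝ}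
    {B X : Matrix (Fin n) (Fin m) ℝ} (hT : EntryNonneg T) (hB : EntryNonneg B)
    (hpow : Tendsto (T ^ ·) atTop (𝓝 0)) (h : X = B + T * X) : EntryNonneg X := by
  have hlim : Tendsto (fun k => X - T ^ k * X) atTop (𝓝 X) := by
    simpa using tendsto_const_nhds.sub
      (((continuous_id.matrix_mul (continuous_const (y := X))).tendsto 0).comp hpow)
  intro p q
  refine ge_of_tendsto (tendsto_pi_nhds.mp (tendsto_pi_nhds.mp hlim p) q)
    (Eventually.of_forall fun k => ?_)
  rw [sub_eq_iff_eq_add.mpr (Matrix.eq_sum_range_pow_mul_add h k)]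
  exact (hT.sum_range_pow k).mul hB p q

end EntryNonneg

theorem Matrix.tendsto_map_ofReal_iff {ι κ : Type*} {l : Filter ℕ} {f : ℕ → Matrix ι κ ℝ} :
    Tendsto (fun k => (f k).map (algebraMap ℝ ℂ)) l (𝓝 0) ↔ Tendsto f l (𝓝 0) := by
  constructor
  · intro h
    simpa [Function.comp_def, Matrix.map_map] using
      ((continuous_id.matrix_map Complex.continuous_re).tendsto 0).comp h
  · intro h
    simpa [Function.comp_def] using
      ((continuous_id.matrix_map Complex.continuous_ofReal).tendsto 0).comp h

theorem isEigen_iff_mem_spectrum {n : ℕ} {M : Matrix (Fin n) (Fin n) ℝ} {μ : ℂ} :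
    IsEigen M μ ↔ μ ∈ spectrum ℂ (M.map (algebraMap ℝ ℂ)) :=
  Matrix.mem_spectrum_iff_isRoot_charpoly.symm

theorem specRad_lt_one_iff_forall_isEigen {n : ℕ} {M : Matrix (Fin n) (Fin n) ℝ} :
    specRad M < 1 ↔ ∀ μ, IsEigen M μ → ‖μ‖ < 1 := by
  have hfin : {r : ℝ | ∃ μ : ℂ, IsEigen M μ ∧ r = ‖μ‖}.Finite := by
    have : {μ | IsEigen M μ}.Finite :=
      Polynomial.finite_setOfPred_isRoot (Matrix.charpoly_monic _).ne_zero
    simpa [Set.image, eq_comm] using this.image (‖·‖)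
  refine ⟨fun h μ hμ => (le_csSup hfin.bddAbove ⟨μ, hμ, rfl⟩).trans_lt h, fun h => ?_⟩
  rcases Set.eq_empty_or_nonempty {r : ℝ | ∃ μ : ℂ, IsEigen M μ ∧ r = ‖μ‖} with hS | hS
  · simp [specRad, hS]
  · obtain ⟨μ, hμ, hr⟩ := hS.csSup_mem hfin
    rw [specRad, hr]
    exact h μ hμ

theorem Matrix.tendsto_pow_atTop_nhds_zero_of_forall_mem_spectrum {ι : Type*} [Fintype ι]
    [DecidableEq ι] {M : Matrix ι ι ℂ} (h : ∀ μ ∈ spectrum ℂ M, ‖μ‖ < 1) :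
    Tendsto (M ^ ·) atTop (𝓝 0) := by
  let _ : NormedRing (Matrix ι ι ℂ) := Matrix.linftyOpNormedRing
  let _ : NormedAlgebra ℂ (Matrix ι ι ℂ) := Matrix.linftyOpNormedAlgebra
  rcases isEmpty_or_nonempty ι with hι | hι
  · exact tendsto_const_nhds.congr fun k => Subsingleton.elim _ _
  have hrad : spectralRadius ℂ M < 1 := by
    simpa using spectrum.spectralRadius_lt_of_forall_lt M (r := 1) fun μ hμ => by
      simpa [← NNReal.coe_lt_one] using h μ hμ
  obtain ⟨c, hρc, hc1⟩ := ENNReal.lt_iff_exists_nnreal_btwn.mp hrad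
  have hbound : ∀ᶠ k : ℕ in atTop, ‖M ^ k‖ ≤ (c : ℝ) ^ k := by
    have hgelfand := spectrum.pow_nnnorm_pow_one_div_tendsto_nhds_spectralRadius M
    filter_upwards [hgelfand.eventually_lt_const hρc, eventually_ge_atTop 1] with k hk hk1
    have hk0 : (k : ℝ) ≠ 0 := by positivity
    have := ENNReal.rpow_le_rpow hk.le (by positivity : (0 : ℝ) ≤ k)
    rw [← ENNReal.rpow_mul, one_div, inv_mul_cancel₀ hk0, ENNReal.rpow_one,
      ENNReal.rpow_natCast] at this
    exact_mod_cast this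
  exact squeeze_zero_norm' hbound
    (tendsto_pow_atTop_nhds_zero_of_lt_one c.coe_nonneg (by exact_mod_cast hc1))

theorem Matrix.norm_lt_one_of_mem_spectrum {ι : Type*} [Fintype ι] [DecidableEq ι]
    {M : Matrix ι ι ℂ} (h : Tendsto (M ^ ·) atTop (𝓝 0)) {μ : ℂ} (hμ : μ ∈ spectrum ℂ M) :
    ‖μ‖ < 1 := by
  rw [← spectrum_toLin', ← Module.End.hasEigenvalue_iff_mem_spectrum] at hμ
  obtain ⟨v, hv⟩ := hμ.exists_hasEigenvector
  have hpow : Tendsto (fun k => μ ^ k • v) atTop (𝓝 0) := by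
    have := ((continuous_id.matrix_mulVec (continuous_const (y := v))).tendsto 0).comp h
    simpa [Function.comp_def, ← Matrix.toLin'_apply, map_pow, hv.pow_apply] using this
  have := (tendsto_zero_iff_norm_tendsto_zero.mp hpow).div_const ‖v‖
  simp only [norm_smul, norm_pow, mul_div_cancel_right₀ _ (norm_ne_zero_iff.mpr hv.2),
    zero_div] at this
  simpa using tendsto_pow_atTop_nhds_zero_iff.mp this

theorem specRad_lt_one_iff_tendsto_pow {n : ℕ} {M : Matrix (Fin n) (Fin n) ℝ} :
    specRad M < 1 ↔ Tendsto (M ^ ·) atTop (𝓝 0) := by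
  have hmap (k : ℕ) : (M ^ k).map (algebraMap ℝ ℂ) = M.map (algebraMap ℝ ℂ) ^ k :=
    map_pow (algebraMap ℝ ℂ).mapMatrix M k
  simp_rw [specRad_lt_one_iff_forall_isEigen, isEigen_iff_mem_spectrum,
    ← Matrix.tendsto_map_ofReal_iff, hmap]
  exact ⟨Matrix.tendsto_pow_atTop_nhds_zero_of_forall_mem_spectrum,
    fun h _ => Matrix.norm_lt_one_of_mem_spectrum h⟩

theorem stmt3 {m n : ℕ} (A U V : Matrix (Fin m) (Fin n) ℝ)
    (Ad : Matrix (Fin n) (Fin m) ℝ) (Ud : Matrix (Fin n) (Fin m) ℝ)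
    (hps : ProperSplitting A U V) (hA : IsMP A Ad) (hU : IsMP U Ud)
    (hUd : EntryNonneg Ud) (hUdV : EntryNonneg (Ud * V)) :
    EntryNonneg Ad ↔ specRad (Ud * V) < 1 := by
  have hrec := hps.pinv_eq_add_mul hA hU
  rw [specRad_lt_one_iff_tendsto_pow]
  refine ⟨fun hAd => ?_, fun hpow => entryNonneg_of_eq_add_mul hUdV hUd hpow hrec⟩
  have h := tendsto_pow_mul_of_eq_add_mul hUdV hUd hAd hrec
  refine (tendsto_add_atTop_iff_nat 1).mp ?_
  simpa [Function.comp_def, pow_succ, Matrix.mul_assoc] using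
    ((continuous_id.matrix_mul (continuous_const (y := V))).tendsto 0).comp h
end

section
/- Let A₁ = U₁ - V and A₂ = U₂ - V be proper weak regular splittings where A₁ = U₁ - V is of type I and A₂ = U₂ - V is of type II (or vice versa), with ρ(U₁†V) > 0, ρ(U₂†V) > 0, V ≠ 0, and A₂† > A₁† ≥ 0 entrywise. Then ρ(U₁†V) < ρ(U₂†V) < 1. -/
open Matrix Polynomial

/-!
A proper splitting satisfies `A† = U† + U†VA† = U† + A†VU†`. When the iteration matrix `R`
(`U†V` for type I, `VU†` for type II) is nonnegative, this forces `ρ(R) < 1` and exhibits `A†V`,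
resp. `VA†`, as the nonnegative matrix `S = R + RS = ∑_{k ≥ 1} Rᵏ`, whose spectral radius is
`ρ(R) / (1 - ρ(R))`. As `t ↦ t / (1 - t)` is increasing and `ρ(U†V) = ρ(VU†)`, the claim reduces
(after transposing, if necessary) to `ρ(VA₁†) < ρ(A₂†V)`. This follows from the Collatz–Wielandt
bound applied to `A₁†x` for a Perron vector `x` of `VA₁†`, because `A₁† < A₂†` entrywise.
The only analytic input is Gelfand's formula, through `Mᴺ / cᴺ → 0` for `ρ(M) < c`.
-/

open Filter Topology

section SpectralRadius

variable {k : ℕ}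

lemma isEigen_iff_exists_mulVec_eq_smul {M : Matrix (Fin k) (Fin k) ℝ} {μ : ℂ} :
    IsEigen M μ ↔ ∃ z : Fin k → ℂ, z ≠ 0 ∧ M.map (algebraMap ℝ ℂ) *ᵥ z = μ • z := by
  rw [IsEigen, ← Matrix.mem_spectrum_iff_isRoot_charpoly, ← Matrix.spectrum_toLin',
    ← Module.End.hasEigenvalue_iff_mem_spectrum, Module.End.hasEigenvalue_iff,
    Submodule.ne_bot_iff]
  simp only [Module.End.mem_eigenspace_iff, Matrix.toLin'_apply, ne_eq]
  exact exists_congr fun z => and_comm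

lemma isEigen_transpose_iff {M : Matrix (Fin k) (Fin k) ℝ} {μ : ℂ} :
    IsEigen Mᵀ μ ↔ IsEigen M μ := by
  rw [IsEigen, IsEigen, Matrix.transpose_map, Matrix.charpoly_transpose]

lemma isEigen_mul_comm {a b : ℕ} {A : Matrix (Fin a) (Fin b) ℝ} {B : Matrix (Fin b) (Fin a) ℝ}
    {μ : ℂ} (hμ : μ ≠ 0) (h : IsEigen (A * B) μ) : IsEigen (B * A) μ := by
  have := congrArg (Polynomial.eval μ)
    (Matrix.charpoly_mul_comm' (A.map (algebraMap ℝ ℂ)) (B.map (algebraMap ℝ ℂ)))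
  rw [IsEigen, Matrix.map_mul] at h ⊢
  simp only [Polynomial.eval_mul, Polynomial.eval_pow, Polynomial.eval_X, h.eq_zero,
    mul_zero] at this
  exact (mul_eq_zero.mp this.symm).resolve_left (pow_ne_zero _ hμ)

lemma finite_setOf_norm_isEigen (M : Matrix (Fin k) (Fin k) ℝ) :
    {r : ℝ | ∃ μ, IsEigen M μ ∧ r = ‖μ‖}.Finite := by
  refine ((Polynomial.finite_setOfPred_isRoot (M.map (algebraMap ℝ ℂ)).charpoly_monic.ne_zero).image
    (‖·‖ : ℂ → ℝ)).subset ?_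
  rintro _ ⟨μ, hμ, rfl⟩
  exact ⟨μ, hμ, rfl⟩

lemma norm_le_specRad {M : Matrix (Fin k) (Fin k) ℝ} {μ : ℂ} (h : IsEigen M μ) :
    ‖μ‖ ≤ specRad M :=
  le_csSup (finite_setOf_norm_isEigen M).bddAbove ⟨μ, h, rfl⟩

lemma specRad_nonneg (M : Matrix (Fin k) (Fin k) ℝ) : 0 ≤ specRad M :=
  Real.sSup_nonneg (by rintro _ ⟨μ, -, rfl⟩; exact norm_nonneg μ)

lemma specRad_le {M : Matrix (Fin k) (Fin k) ℝ} {a : ℝ} (ha : 0 ≤ a)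
    (h : ∀ μ, IsEigen M μ → ‖μ‖ ≤ a) : specRad M ≤ a :=
  Real.sSup_le (by rintro _ ⟨μ, hμ, rfl⟩; exact h μ hμ) ha

lemma exists_isEigen_norm_eq_specRad {M : Matrix (Fin k) (Fin k) ℝ} (h : 0 < specRad M) :
    ∃ μ, IsEigen M μ ∧ ‖μ‖ = specRad M := by
  have hne : {r : ℝ | ∃ μ, IsEigen M μ ∧ r = ‖μ‖}.Nonempty :=
    Set.nonempty_iff_ne_empty.mpr fun hem => by
      rw [specRad, hem, Real.sSup_empty] at h
      exact h.false
  obtain ⟨μ, hμ, hr⟩ := hne.csSup_mem (finite_setOf_norm_isEigen M)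
  exact ⟨μ, hμ, hr.symm⟩

lemma specRad_transpose (M : Matrix (Fin k) (Fin k) ℝ) : specRad Mᵀ = specRad M :=
  le_antisymm
    (specRad_le (specRad_nonneg M) fun _ hμ => norm_le_specRad (isEigen_transpose_iff.mp hμ))
    (specRad_le (specRad_nonneg _) fun _ hμ => norm_le_specRad (isEigen_transpose_iff.mpr hμ))

lemma specRad_mul_comm_le {a b : ℕ} (A : Matrix (Fin a) (Fin b) ℝ) (B : Matrix (Fin b) (Fin a) ℝ) :
    specRad (A * B) ≤ specRad (B * A) := by
  refine specRad_le (specRad_nonneg _) fun μ hμ => ?_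
  rcases eq_or_ne μ 0 with rfl | hμ0
  · simpa using specRad_nonneg (B * A)
  · exact norm_le_specRad (isEigen_mul_comm hμ0 hμ)

lemma specRad_mul_comm {a b : ℕ} (A : Matrix (Fin a) (Fin b) ℝ) (B : Matrix (Fin b) (Fin a) ℝ) :
    specRad (A * B) = specRad (B * A) :=
  le_antisymm (specRad_mul_comm_le A B) (specRad_mul_comm_le B A)

end SpectralRadius

section Gelfand

lemma eventually_norm_pow_le_pow {A : Type*} [NormedRing A] [NormedAlgebra ℂ A] [CompleteSpace A]
    {a : A} {r : ℝ} (h : spectralRadius ℂ a < ENNReal.ofReal r) :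
    ∀ᶠ N : ℕ in atTop, ‖a ^ N‖ ≤ r ^ N := by
  filter_upwards [(spectrum.pow_norm_pow_one_div_tendsto_nhds_spectralRadius a).eventually_lt_const
    h, eventually_ne_atTop 0] with N hN hN0
  have hlt : ‖a ^ N‖ ^ (N : ℝ)⁻¹ < r := by
    simpa using (ENNReal.ofReal_lt_ofReal_iff'.mp hN).1
  calc ‖a ^ N‖ = (‖a ^ N‖ ^ (N : ℝ)⁻¹) ^ N :=
        (Real.rpow_inv_natCast_pow (norm_nonneg _) hN0).symm
    _ ≤ r ^ N := pow_le_pow_left₀ (by positivity) hlt.le N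

variable {k : ℕ}

lemma spectralRadius_map_le_specRad (M : Matrix (Fin k) (Fin k) ℝ) :
    spectralRadius ℂ (M.map (algebraMap ℝ ℂ)) ≤ ENNReal.ofReal (specRad M) := by
  refine iSup₂_le fun μ hμ => ?_
  rw [Matrix.mem_spectrum_iff_isRoot_charpoly] at hμ
  rw [← ENNReal.ofReal_coe_nnreal, coe_nnnorm]
  exact ENNReal.ofReal_le_ofReal (norm_le_specRad hμ)

attribute [local instance] Matrix.linftyOpNormedAddCommGroup Matrix.linftyOpNormedRing
  Matrix.linftyOpNormedAlgebra

lemma norm_entry_le_linfty_opNorm {a b : ℕ} (A : Matrix (Fin a) (Fin b) ℂ) (i : Fin a) (j : Fin b) :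
    ‖A i j‖ ≤ ‖A‖ :=
  calc ‖A i j‖ ≤ ‖WithLp.toLp 1 (A i)‖ := PiLp.norm_apply_le (WithLp.toLp 1 (A i)) j
    _ ≤ ‖fun i => WithLp.toLp 1 (A i)‖ := norm_le_pi_norm (fun i => WithLp.toLp 1 (A i)) i

lemma tendsto_pow_apply_div_pow {M : Matrix (Fin k) (Fin k) ℝ} {c : ℝ} (h : specRad M < c)
    (i j : Fin k) : Tendsto (fun N : ℕ => (M ^ N) i j / c ^ N) atTop (𝓝 0) := by
  obtain ⟨c', hMc', hc'c⟩ := exists_between h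
  have hc' : 0 < c' := (specRad_nonneg M).trans_lt hMc'
  have hc : 0 < c := hc'.trans hc'c
  have hrad : spectralRadius ℂ (M.map (algebraMap ℝ ℂ)) < ENNReal.ofReal c' :=
    (spectralRadius_map_le_specRad M).trans_lt ((ENNReal.ofReal_lt_ofReal_iff hc').2 hMc')
  have hbound : ∀ᶠ N : ℕ in atTop, ‖(M ^ N) i j / c ^ N‖ ≤ (c' / c) ^ N := by
    filter_upwards [eventually_norm_pow_le_pow hrad] with N hN
    rw [norm_div, norm_pow, Real.norm_of_nonneg hc.le, div_pow]
    gcongr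
    calc ‖(M ^ N) i j‖ = ‖(M.map (algebraMap ℝ ℂ) ^ N) i j‖ := by
          rw [← Matrix.map_pow]; simp
      _ ≤ ‖M.map (algebraMap ℝ ℂ) ^ N‖ := norm_entry_le_linfty_opNorm _ i j
      _ ≤ c' ^ N := hN
  exact squeeze_zero_norm' hbound
    (tendsto_pow_atTop_nhds_zero_of_lt_one (by positivity) ((div_lt_one hc).2 hc'c))

end Gelfand

section Nonneg

variable {a b c k : ℕ}

lemma EntryNonneg.mul_s6 {A : Matrix (Fin a) (Fin b) ℝ} {B : Matrix (Fin b) (Fin c) ℝ}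
    (hA : EntryNonneg A) (hB : EntryNonneg B) : EntryNonneg (A * B) :=
  fun i j => by
    rw [Matrix.mul_apply]; exact Finset.sum_nonneg fun l _ => mul_nonneg (hA i l) (hB l j)

lemma entryNonneg_one : EntryNonneg (1 : Matrix (Fin k) (Fin k) ℝ) := fun i j => by
  rw [Matrix.one_apply]; split_ifs <;> norm_num

lemma EntryNonneg.pow_s6 {M : Matrix (Fin k) (Fin k) ℝ} (hM : EntryNonneg M) (N : ℕ) :
    EntryNonneg (M ^ N) := by
  induction N with
  | zero => exact entryNonneg_one
  | succ N ih => rw [pow_succ]; exact ih.mul_s6 hM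

lemma EntryNonneg.transpose {A : Matrix (Fin a) (Fin b) ℝ} (hA : EntryNonneg A) :
    EntryNonneg Aᵀ :=
  fun i j => hA j i

lemma EntryNonneg.mulVec_mono {A : Matrix (Fin a) (Fin b) ℝ} (hA : EntryNonneg A)
    {x y : Fin b → ℝ} (h : x ≤ y) : A *ᵥ x ≤ A *ᵥ y :=
  fun i => by
    simp only [Matrix.mulVec, dotProduct]
    exact Finset.sum_le_sum fun j _ => mul_le_mul_of_nonneg_left (h j) (hA i j)

lemma EntryNonneg.mulVec_nonneg {A : Matrix (Fin a) (Fin b) ℝ} (hA : EntryNonneg A)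
    {x : Fin b → ℝ} (hx : 0 ≤ x) : 0 ≤ A *ᵥ x := by
  simpa using hA.mulVec_mono hx

lemma exists_pos_of_nonneg_of_ne_zero {x : Fin k → ℝ} (hx : 0 ≤ x) (hx0 : x ≠ 0) :
    ∃ i, 0 < x i := by
  by_contra! h
  exact hx0 (le_antisymm h hx)

lemma exists_nonneg_specRad_smul_le_mulVec {M : Matrix (Fin k) (Fin k) ℝ} (hM : EntryNonneg M)
    (h : 0 < specRad M) : ∃ x, 0 ≤ x ∧ x ≠ 0 ∧ specRad M • x ≤ M *ᵥ x := by
  obtain ⟨μ, hμ, hnorm⟩ := exists_isEigen_norm_eq_specRad h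
  obtain ⟨z, hz, hMz⟩ := isEigen_iff_exists_mulVec_eq_smul.mp hμ
  refine ⟨fun i => ‖z i‖, fun i => norm_nonneg _,
    fun h0 => hz (funext fun i => norm_eq_zero.mp (congrFun h0 i)), fun i => ?_⟩
  calc specRad M * ‖z i‖ = ‖(M.map (algebraMap ℝ ℂ) *ᵥ z) i‖ := by
        rw [hMz, Pi.smul_apply, smul_eq_mul, norm_mul, hnorm]
    _ = ‖∑ j, M.map (algebraMap ℝ ℂ) i j * z j‖ := rfl
    _ ≤ ∑ j, ‖M.map (algebraMap ℝ ℂ) i j * z j‖ := norm_sum_le _ _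
    _ = (M *ᵥ fun i => ‖z i‖) i := by
        simp [Matrix.mulVec, dotProduct, abs_of_nonneg (hM _ _)]

lemma le_specRad_of_smul_le_mulVec {M : Matrix (Fin k) (Fin k) ℝ} (hM : EntryNonneg M)
    {x : Fin k → ℝ} (hx : 0 ≤ x) (hx0 : x ≠ 0) {c : ℝ} (h : c • x ≤ M *ᵥ x) :
    c ≤ specRad M := by
  by_contra! hlt
  have hc : 0 < c := (specRad_nonneg M).trans_lt hlt
  obtain ⟨i, hi⟩ := exists_pos_of_nonneg_of_ne_zero hx hx0
  have hpow : ∀ N : ℕ, c ^ N • x ≤ M ^ N *ᵥ x := by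
    intro N
    induction N with
    | zero => simp
    | succ N ih =>
      calc c ^ (N + 1) • x = c • c ^ N • x := by rw [smul_smul, pow_succ']
        _ ≤ c • (M ^ N *ᵥ x) := smul_le_smul_of_nonneg_left ih hc.le
        _ = M ^ N *ᵥ (c • x) := (Matrix.mulVec_smul _ _ _).symm
        _ ≤ M ^ N *ᵥ (M *ᵥ x) := (hM.pow_s6 N).mulVec_mono h
        _ = M ^ (N + 1) *ᵥ x := by rw [Matrix.mulVec_mulVec, pow_succ]
  have hle : ∀ N : ℕ, x i ≤ ∑ j, (M ^ N) i j / c ^ N * x j := fun N => by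
    have hN := hpow N i
    simp only [Pi.smul_apply, smul_eq_mul, Matrix.mulVec, dotProduct] at hN
    calc x i = c ^ N * x i / c ^ N := by field_simp
      _ ≤ (∑ j, (M ^ N) i j * x j) / c ^ N := by gcongr
      _ = ∑ j, (M ^ N) i j / c ^ N * x j := by
          rw [Finset.sum_div]; exact Finset.sum_congr rfl fun j _ => by ring
  have hlim : Tendsto (fun N : ℕ => ∑ j, (M ^ N) i j / c ^ N * x j) atTop (𝓝 0) := by
    simpa using tendsto_finsetSum _ fun j _ => (tendsto_pow_apply_div_pow hlt i j).mul_const (x j)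
  exact hi.not_ge (ge_of_tendsto' hlim hle)

end Nonneg

section NeumannSeries

variable {k : ℕ}

lemma tendsto_pow_apply_of_specRad_lt_one {M : Matrix (Fin k) (Fin k) ℝ} (h : specRad M < 1)
    (i j : Fin k) : Tendsto (fun N : ℕ => (M ^ N) i j) atTop (𝓝 0) := by
  simpa using tendsto_pow_apply_div_pow h i j

lemma EntryNonneg.of_eq_one_add_mul {R T : Matrix (Fin k) (Fin k) ℝ} (hR : EntryNonneg R)
    (hρ : specRad R < 1) (hT : T = 1 + R * T) : EntryNonneg T := by
  have hpartial : ∀ N : ℕ, EntryNonneg (T - R ^ N * T) := by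
    intro N
    induction N with
    | zero => intro i j; simp
    | succ N ih =>
      have hstep : R ^ N * T = R ^ N + R ^ (N + 1) * T := by
        conv_lhs => rw [hT]
        rw [Matrix.mul_add, Matrix.mul_one, pow_succ, Matrix.mul_assoc]
      have hsplit : T - R ^ (N + 1) * T = (T - R ^ N * T) + R ^ N := by rw [hstep]; abel
      intro i j
      rw [hsplit, Matrix.add_apply]
      exact add_nonneg (ih i j) (hR.pow_s6 N i j)
  intro i j
  have hlim : Tendsto (fun N : ℕ => (T - R ^ N * T) i j) atTop (𝓝 (T i j)) := by
    simpa [Matrix.mul_apply] using tendsto_const_nhds.sub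
      (tendsto_finsetSum _ fun l _ =>
        (tendsto_pow_apply_of_specRad_lt_one hρ i l).mul_const (T l j))
  exact ge_of_tendsto' hlim fun N => hpartial N i j

lemma isEigen_div_one_add_of_eq_add_mul {R S : Matrix (Fin k) (Fin k) ℝ} (hS : S = R + R * S)
    {ν : ℂ} (hν : IsEigen S ν) : 1 + ν ≠ 0 ∧ IsEigen R (ν / (1 + ν)) := by
  set f := algebraMap ℝ ℂ
  have hSc : S.map f = R.map f * (1 + S.map f) := by
    rw [Matrix.mul_add, Matrix.mul_one, ← Matrix.map_mul, ← Matrix.map_add _ (map_add f), ← hS]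
  have hinv : (1 - R.map f) * (1 + S.map f) = 1 := by
    rw [Matrix.sub_mul, Matrix.one_mul, ← hSc]; abel
  obtain ⟨z, hz, hSz⟩ := isEigen_iff_exists_mulVec_eq_smul.mp hν
  have hTz : (1 + S.map f) *ᵥ z = (1 + ν) • z := by
    rw [Matrix.add_mulVec, Matrix.one_mulVec, hSz, add_smul, one_smul]
  have hν1 : 1 + ν ≠ 0 := by
    intro h0
    apply hz
    rw [← Matrix.one_mulVec z, ← hinv, ← Matrix.mulVec_mulVec, hTz, h0, zero_smul,
      Matrix.mulVec_zero]
  refine ⟨hν1, isEigen_iff_exists_mulVec_eq_smul.mpr ⟨z, hz, ?_⟩⟩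
  have hRz : (1 + ν) • (R.map f *ᵥ z) = ν • z := by
    rw [← Matrix.mulVec_smul, ← hTz, Matrix.mulVec_mulVec, ← hSc, hSz]
  rw [div_eq_inv_mul, mul_smul, ← hRz, smul_smul, inv_mul_cancel₀ hν1, one_smul]

theorem entryNonneg_and_specRad_eq_of_eq_add_mul {R S : Matrix (Fin k) (Fin k) ℝ}
    (hR : EntryNonneg R) (hρ : specRad R < 1) (hS : S = R + R * S) :
    EntryNonneg S ∧ specRad S = specRad R / (1 - specRad R) := by
  have hρ0 := specRad_nonneg R
  have hS' : S = R * (1 + S) := by rw [Matrix.mul_add, Matrix.mul_one]; exact hS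
  have hT : EntryNonneg (1 + S) :=
    hR.of_eq_one_add_mul hρ (by rw [Matrix.mul_add, Matrix.mul_one, ← hS])
  have hSnn : EntryNonneg S := hS' ▸ hR.mul_s6 hT
  have hinv : (1 - R) * (1 + S) = 1 := by rw [Matrix.sub_mul, Matrix.one_mul, ← hS']; abel
  refine ⟨hSnn, le_antisymm ?_ ?_⟩
  · refine specRad_le (div_nonneg hρ0 (by linarith)) fun ν hν => ?_
    obtain ⟨hν1, hμ⟩ := isEigen_div_one_add_of_eq_add_mul hS hν
    have hle : ‖ν‖ ≤ specRad R * (1 + ‖ν‖) :=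
      calc ‖ν‖ = ‖ν / (1 + ν)‖ * ‖1 + ν‖ := by
            rw [norm_div, div_mul_cancel₀ _ (norm_ne_zero_iff.mpr hν1)]
        _ ≤ specRad R * (1 + ‖ν‖) :=
            mul_le_mul (norm_le_specRad hμ) ((norm_add_le _ _).trans (by rw [norm_one]))
              (norm_nonneg _) hρ0
    rw [le_div_iff₀ (by linarith)]
    linarith
  · rcases hρ0.eq_or_lt with h0 | hpos
    · rw [← h0]; simpa using specRad_nonneg S
    obtain ⟨x, hx, hx0, hRx⟩ := exists_nonneg_specRad_smul_le_mulVec hR hpos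
    have hbound : x ≤ (1 - specRad R) • ((1 + S) *ᵥ x) :=
      calc x = (1 + S) *ᵥ ((1 - R) *ᵥ x) := by
            rw [Matrix.mulVec_mulVec, mul_eq_one_comm.mp hinv, Matrix.one_mulVec]
        _ ≤ (1 + S) *ᵥ ((1 - specRad R) • x) := hT.mulVec_mono fun j => by
            have := hRx j
            simp only [Pi.smul_apply, smul_eq_mul] at this
            simp only [Matrix.sub_mulVec, Matrix.one_mulVec, Pi.sub_apply, Pi.smul_apply,
              smul_eq_mul]
            linarith
        _ = (1 - specRad R) • ((1 + S) *ᵥ x) := Matrix.mulVec_smul _ _ _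
    refine le_specRad_of_smul_le_mulVec hSnn hx hx0 fun i => ?_
    have hi := hbound i
    simp only [Pi.smul_apply, smul_eq_mul, Matrix.add_mulVec, Matrix.one_mulVec,
      Pi.add_apply] at hi ⊢
    rw [div_mul_eq_mul_div, div_le_iff₀ (by linarith)]
    linarith

end NeumannSeries

section Splittings

variable {m n : ℕ}

lemma specRad_mul_lt_one_of_eq_add_mul_mul {Ad Ud : Matrix (Fin n) (Fin m) ℝ}
    {V : Matrix (Fin m) (Fin n) ℝ} (hAd : EntryNonneg Ad) (hUd : EntryNonneg Ud)
    (hVUd : EntryNonneg (V * Ud)) (h : Ad = Ud + Ad * V * Ud) : specRad (V * Ud) < 1 := by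
  by_contra! hρ
  obtain ⟨x, hx, hx0, hVUx⟩ := exists_nonneg_specRad_smul_le_mulVec hVUd (one_pos.trans_le hρ)
  -- For a Perron vector `x` of `V * Ud` the identity gives `Ud x + ρ • Ad x ≤ Ad x`; as `ρ ≥ 1`,
  -- this forces `Ud x = 0`, hence `ρ • x ≤ V (Ud x) = 0`.
  have hkey : Ud *ᵥ x + specRad (V * Ud) • (Ad *ᵥ x) ≤ Ad *ᵥ x :=
    calc Ud *ᵥ x + specRad (V * Ud) • (Ad *ᵥ x) = Ud *ᵥ x + Ad *ᵥ (specRad (V * Ud) • x) := by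
          rw [Matrix.mulVec_smul]
      _ ≤ Ud *ᵥ x + Ad *ᵥ ((V * Ud) *ᵥ x) := add_le_add_right (hAd.mulVec_mono hVUx) _
      _ = Ad *ᵥ x := by
          conv_rhs => rw [h]
          rw [Matrix.add_mulVec, Matrix.mulVec_mulVec, Matrix.mul_assoc]
  have hUx : Ud *ᵥ x = 0 := by
    funext i
    have h1 := hkey i
    have h2 := hAd.mulVec_nonneg hx i
    have h3 := hUd.mulVec_nonneg hx i
    simp only [Pi.add_apply, Pi.smul_apply, smul_eq_mul, Pi.zero_apply] at h1 h2 h3 ⊢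
    nlinarith
  refine hx0 (le_antisymm (fun i => ?_) hx)
  have h1 := hVUx i
  rw [← Matrix.mulVec_mulVec, hUx, Matrix.mulVec_zero] at h1
  simp only [Pi.smul_apply, smul_eq_mul, Pi.zero_apply] at h1 ⊢
  nlinarith [hx i]

lemma specRad_mul_lt_one_of_eq_add_mul_mul' {Ad Ud : Matrix (Fin n) (Fin m) ℝ}
    {V : Matrix (Fin m) (Fin n) ℝ} (hAd : EntryNonneg Ad) (hUd : EntryNonneg Ud)
    (hUdV : EntryNonneg (Ud * V)) (h : Ad = Ud + Ud * V * Ad) : specRad (Ud * V) < 1 := by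
  have hT := specRad_mul_lt_one_of_eq_add_mul_mul hAd.transpose hUd.transpose
    (V := Vᵀ) (by rw [← Matrix.transpose_mul]; exact hUdV.transpose)
    (by simpa [Matrix.transpose_mul, Matrix.mul_assoc] using congrArg Matrix.transpose h)
  rwa [← Matrix.transpose_mul, specRad_transpose] at hT

lemma exists_one_lt_mul_lt {ι : Type*} [Finite ι] {w w' : ι → ℝ} (h : ∀ i, w i < w' i) :
    ∃ t, 1 < t ∧ ∀ i, t * w i < w' i := by
  have hnear : ∀ᶠ t in 𝓝 (1 : ℝ), ∀ i, t * w i < w' i :=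
    eventually_all.2 fun i =>
      (tendsto_id.mul_const (w i)).eventually_lt_const (by simpa using h i)
  obtain ⟨t, ht, h1⟩ :=
    ((hnear.filter_mono (nhdsWithin_le_nhds (s := Set.Ioi 1))).and self_mem_nhdsWithin).exists
  exact ⟨t, h1, ht⟩

theorem specRad_mul_lt_specRad_mul {B₁ B₂ : Matrix (Fin n) (Fin m) ℝ}
    {V : Matrix (Fin m) (Fin n) ℝ} (hB₁ : EntryNonneg B₁) (hlt : EntryLT B₁ B₂)
    (hVB₁ : EntryNonneg (V * B₁)) (hB₂V : EntryNonneg (B₂ * V)) (hpos : 0 < specRad (V * B₁)) :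
    specRad (V * B₁) < specRad (B₂ * V) := by
  set ρ := specRad (V * B₁)
  have hB₂ : EntryNonneg B₂ := fun i j => (hB₁ i j).trans (hlt i j).le
  obtain ⟨x, hx, hx0, hVBx⟩ := exists_nonneg_specRad_smul_le_mulVec hVB₁ hpos
  obtain ⟨i₀, hi₀⟩ := exists_pos_of_nonneg_of_ne_zero hx hx0
  have hstrict : ∀ i, (B₁ *ᵥ x) i < (B₂ *ᵥ x) i := fun i =>
    Finset.sum_lt_sum (fun j _ => mul_le_mul_of_nonneg_right (hlt i j).le (hx j))
      ⟨i₀, Finset.mem_univ _, mul_lt_mul_of_pos_right (hlt i i₀) hi₀⟩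
  obtain ⟨t, ht, hBt⟩ := exists_one_lt_mul_lt hstrict
  have hz0 : B₁ *ᵥ x ≠ 0 := by
    intro h0
    refine hx0 (le_antisymm (fun i => ?_) hx)
    have h1 := hVBx i
    rw [← Matrix.mulVec_mulVec, h0, Matrix.mulVec_zero] at h1
    simp only [Pi.smul_apply, smul_eq_mul, Pi.zero_apply] at h1 ⊢
    nlinarith [hx i]
  have hsub : (ρ * t) • (B₁ *ᵥ x) ≤ (B₂ * V) *ᵥ (B₁ *ᵥ x) := fun i =>
    calc ρ * t * (B₁ *ᵥ x) i ≤ ρ * (B₂ *ᵥ x) i := by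
          rw [mul_assoc]; exact mul_le_mul_of_nonneg_left (hBt i).le hpos.le
      _ = (B₂ *ᵥ (ρ • x)) i := by rw [Matrix.mulVec_smul]; rfl
      _ ≤ (B₂ *ᵥ (V *ᵥ (B₁ *ᵥ x))) i := hB₂.mulVec_mono (by rwa [Matrix.mulVec_mulVec]) i
      _ = ((B₂ * V) *ᵥ (B₁ *ᵥ x)) i := by rw [Matrix.mulVec_mulVec]
  calc ρ < ρ * t := lt_mul_of_one_lt_right hpos ht
    _ ≤ specRad (B₂ * V) := le_specRad_of_smul_le_mulVec hB₂V (hB₁.mulVec_nonneg hx) hz0 hsub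

end Splittings

section MoorePenrose

variable {m n p : ℕ}

lemma mul_pinv_mul_eq_of_range_le {A : Matrix (Fin m) (Fin n) ℝ} {Ad : Matrix (Fin n) (Fin m) ℝ}
    {B : Matrix (Fin m) (Fin p) ℝ} (hA : A * Ad * A = A)
    (h : LinearMap.range B.mulVecLin ≤ LinearMap.range A.mulVecLin) : A * Ad * B = B := by
  refine Matrix.ext_iff_mulVec.mpr fun v => ?_
  obtain ⟨w, hw⟩ := h ⟨v, rfl⟩
  simp only [Matrix.mulVecLin_apply] at hw
  rw [← Matrix.mulVec_mulVec, ← hw, Matrix.mulVec_mulVec, hA]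

lemma mul_pinv_mul_eq_of_ker_le {A : Matrix (Fin m) (Fin n) ℝ} {Ad : Matrix (Fin n) (Fin m) ℝ}
    {B : Matrix (Fin p) (Fin n) ℝ} (hA : A * Ad * A = A)
    (h : LinearMap.ker A.mulVecLin ≤ LinearMap.ker B.mulVecLin) : B * Ad * A = B := by
  refine Matrix.ext_iff_mulVec.mpr fun v => ?_
  have hker : (Ad * A) *ᵥ v - v ∈ LinearMap.ker A.mulVecLin := by
    rw [LinearMap.mem_ker, Matrix.mulVecLin_apply, Matrix.mulVec_sub, Matrix.mulVec_mulVec,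
      ← Matrix.mul_assoc, hA, sub_self]
  have hB := h hker
  rw [LinearMap.mem_ker, Matrix.mulVecLin_apply, Matrix.mulVec_sub, Matrix.mulVec_mulVec,
    sub_eq_zero, ← Matrix.mul_assoc] at hB
  exact hB

lemma IsMP.mul_pinv_eq_of_range_eq {A U : Matrix (Fin m) (Fin n) ℝ}
    {Ad Ud : Matrix (Fin n) (Fin m) ℝ} (hA : IsMP A Ad) (hU : IsMP U Ud)
    (h : LinearMap.range U.mulVecLin = LinearMap.range A.mulVecLin) : A * Ad = U * Ud := by
  have hUA : U * Ud * A = A := mul_pinv_mul_eq_of_range_le hU.1 h.ge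
  have hAU : A * Ad * U = U := mul_pinv_mul_eq_of_range_le hA.1 h.le
  calc A * Ad = U * Ud * (A * Ad) := by rw [← Matrix.mul_assoc, hUA]
    _ = (A * Ad * (U * Ud))ᵀ := by rw [Matrix.transpose_mul, hA.2.2.1, hU.2.2.1]
    _ = U * Ud := by rw [← Matrix.mul_assoc, hAU, hU.2.2.1]

lemma IsMP.pinv_mul_eq_of_ker_eq {A U : Matrix (Fin m) (Fin n) ℝ}
    {Ad Ud : Matrix (Fin n) (Fin m) ℝ} (hA : IsMP A Ad) (hU : IsMP U Ud)
    (h : LinearMap.ker U.mulVecLin = LinearMap.ker A.mulVecLin) : Ad * A = Ud * U := by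
  have hAU : A * Ud * U = A := mul_pinv_mul_eq_of_ker_le hU.1 h.le
  have hUA : U * Ad * A = U := mul_pinv_mul_eq_of_ker_le hA.1 h.ge
  calc Ad * A = Ad * A * (Ud * U) := by rw [Matrix.mul_assoc, ← Matrix.mul_assoc A, hAU]
    _ = (Ud * U * (Ad * A))ᵀ := by rw [Matrix.transpose_mul, hA.2.2.2, hU.2.2.2]
    _ = Ud * U := by rw [Matrix.mul_assoc, ← Matrix.mul_assoc U, hUA, hU.2.2.2]

lemma ProperSplitting.pinv_eq {A U V : Matrix (Fin m) (Fin n) ℝ}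
    {Ad Ud : Matrix (Fin n) (Fin m) ℝ} (hs : ProperSplitting A U V) (hA : IsMP A Ad)
    (hU : IsMP U Ud) : Ad = Ud + Ud * V * Ad ∧ Ad = Ud + Ad * V * Ud := by
  obtain ⟨rfl, hran, hker⟩ := hs
  have hP := hA.mul_pinv_eq_of_range_eq hU hran
  have hQ := hA.pinv_mul_eq_of_ker_eq hU hker
  have hV : V = U - (U - V) := by abel
  constructor
  · rw [hV, Matrix.mul_sub, Matrix.sub_mul, Matrix.mul_assoc Ud (U - V), hP, ← Matrix.mul_assoc,
      hU.2.1, ← hQ, hA.2.1]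
    abel
  · rw [hV, Matrix.mul_sub, Matrix.sub_mul, Matrix.mul_assoc Ad U, ← hP, ← Matrix.mul_assoc,
      hA.2.1, hQ, hU.2.1]
    abel

end MoorePenrose

lemma lt_of_div_one_sub_lt_div_one_sub {s t : ℝ} (hs : 0 ≤ s) (hs1 : s < 1)
    (h : s / (1 - s) < t / (1 - t)) : s < t := by
  by_contra! hts
  exact h.not_ge (div_le_div₀ hs hts (by linarith) (by linarith))

theorem specRad_mul_lt_specRad_mul_of_pinv_eq {m n : ℕ} {A₁d A₂d U₁d U₂d : Matrix (Fin n) (Fin m) ℝ}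
    {V : Matrix (Fin m) (Fin n) ℝ} (h₁ : A₁d = U₁d + U₁d * V * A₁d)
    (h₁' : A₁d = U₁d + A₁d * V * U₁d) (h₂ : A₂d = U₂d + U₂d * V * A₂d)
    (hU₁d : EntryNonneg U₁d) (hU₂d : EntryNonneg U₂d) (hVU₁d : EntryNonneg (V * U₁d))
    (hU₂dV : EntryNonneg (U₂d * V)) (hA₁d : EntryNonneg A₁d) (hlt : EntryLT A₁d A₂d)
    (hpos : 0 < specRad (V * U₁d)) :
    specRad (V * U₁d) < specRad (U₂d * V) ∧ specRad (U₂d * V) < 1 := by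
  have hA₂d : EntryNonneg A₂d := fun i j => (hA₁d i j).trans (hlt i j).le
  have hρ₁ := specRad_mul_lt_one_of_eq_add_mul_mul hA₁d hU₁d hVU₁d h₁'
  have hρ₂ := specRad_mul_lt_one_of_eq_add_mul_mul' hA₂d hU₂d hU₂dV h₂
  obtain ⟨hP₁, hρP₁⟩ := entryNonneg_and_specRad_eq_of_eq_add_mul hVU₁d hρ₁
    (show V * A₁d = V * U₁d + V * U₁d * (V * A₁d) by
      conv_lhs => rw [h₁]
      simp only [Matrix.mul_add, Matrix.mul_assoc])
  obtain ⟨hP₂, hρP₂⟩ := entryNonneg_and_specRad_eq_of_eq_add_mul hU₂dV hρ₂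
    (show A₂d * V = U₂d * V + U₂d * V * (A₂d * V) by
      conv_lhs => rw [h₂]
      simp only [Matrix.add_mul, Matrix.mul_assoc])
  have hlt' := specRad_mul_lt_specRad_mul hA₁d hlt hP₁ hP₂
    (by rw [hρP₁]; exact div_pos hpos (by linarith))
  rw [hρP₁, hρP₂] at hlt'
  exact ⟨lt_of_div_one_sub_lt_div_one_sub (specRad_nonneg _) hρ₁ hlt', hρ₂⟩

theorem stmt6_general {m n : ℕ} (A₁ A₂ U₁ U₂ V : Matrix (Fin m) (Fin n) ℝ)
    (A₁d A₂d U₁d U₂d : Matrix (Fin n) (Fin m) ℝ)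
    (hps1 : ProperSplitting A₁ U₁ V) (hps2 : ProperSplitting A₂ U₂ V)
    (hA1 : IsMP A₁ A₁d) (hA2 : IsMP A₂ A₂d) (hU1 : IsMP U₁ U₁d) (hU2 : IsMP U₂ U₂d)
    (hU1d : EntryNonneg U₁d) (hU2d : EntryNonneg U₂d)
    (htypes : (EntryNonneg (U₁d * V) ∧ EntryNonneg (V * U₂d)) ∨
              (EntryNonneg (V * U₁d) ∧ EntryNonneg (U₂d * V)))
    (hr1 : 0 < specRad (U₁d * V))
    (hlt : EntryLT A₁d A₂d) (hA1d : EntryNonneg A₁d) :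
    specRad (U₁d * V) < specRad (U₂d * V) ∧ specRad (U₂d * V) < 1 := by
  obtain ⟨h₁, h₁'⟩ := hps1.pinv_eq hA1 hU1
  obtain ⟨h₂, h₂'⟩ := hps2.pinv_eq hA2 hU2
  rw [specRad_mul_comm U₁d V] at hr1 ⊢
  rcases htypes with ⟨hI, hII⟩ | ⟨hII, hI⟩
  · -- transposing exchanges the two types of splitting
    have htr := specRad_mul_lt_specRad_mul_of_pinv_eq (A₁d := A₁dᵀ) (A₂d := A₂dᵀ) (V := Vᵀ)
      (by simpa [Matrix.transpose_mul, Matrix.mul_assoc] using congrArg Matrix.transpose h₁')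
      (by simpa [Matrix.transpose_mul, Matrix.mul_assoc] using congrArg Matrix.transpose h₁)
      (by simpa [Matrix.transpose_mul, Matrix.mul_assoc] using congrArg Matrix.transpose h₂')
      hU1d.transpose hU2d.transpose (by rw [← Matrix.transpose_mul]; exact hI.transpose)
      (by rw [← Matrix.transpose_mul]; exact hII.transpose) hA1d.transpose (fun i j => hlt j i)
      (by rwa [← Matrix.transpose_mul, specRad_transpose, ← specRad_mul_comm])
    simp only [← Matrix.transpose_mul, specRad_transpose] at htr
    rwa [specRad_mul_comm U₁d V, specRad_mul_comm V U₂d] at htr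
  · exact specRad_mul_lt_specRad_mul_of_pinv_eq h₁ h₁' h₂ hU1d hU2d hII hI hA1d hlt hr1

theorem stmt6 {m n : ℕ} (A₁ A₂ U₁ U₂ V : Matrix (Fin m) (Fin n) ℝ)
    (A₁d A₂d U₁d U₂d : Matrix (Fin n) (Fin m) ℝ)
    (hps1 : ProperSplitting A₁ U₁ V) (hps2 : ProperSplitting A₂ U₂ V)
    (hA1 : IsMP A₁ A₁d) (hA2 : IsMP A₂ A₂d) (hU1 : IsMP U₁ U₁d) (hU2 : IsMP U₂ U₂d)
    (hU1d : EntryNonneg U₁d) (hU2d : EntryNonneg U₂d)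
    (htypes : (EntryNonneg (U₁d * V) ∧ EntryNonneg (V * U₂d)) ∨
              (EntryNonneg (V * U₁d) ∧ EntryNonneg (U₂d * V)))
    (hr1 : 0 < specRad (U₁d * V)) (hr2 : 0 < specRad (U₂d * V))
    (hV : V ≠ 0) (hlt : EntryLT A₁d A₂d) (hA1d : EntryNonneg A₁d) :
    specRad (U₁d * V) < specRad (U₂d * V) ∧ specRad (U₂d * V) < 1 :=
  stmt6_general A₁ A₂ U₁ U₂ V A₁d A₂d U₁d U₂d hps1 hps2 hA1 hA2 hU1 hU2 hU1d hU2d htypes hr1 hlt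
    hA1d
end
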